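/- arXiv:0905.3790 — 6 statements merged into one kernel-verified Lean document; each statement's English description precedes it below -/
import Mathlib

section
/- A finite p-group G has element breadth 1 (i.e., every non-central element has exactly p conjugates, and some element is non-central) if and only if the derived subgroup G' has order p. -/
/-!
If `C_G(x)` has index `p` for every non-central `x`, then each such `C_G(x)` is normal, so the
normal closure `A` of `x` is abelian and `a ↦ ⁅a, g⁆` is a homomorphism on `A`. For `g ∉ C_G(x)`
its image contains every `⁅g ^ n, x⁆`, hence (as `G = ⟨g⟩ C_G(x)`) every `⁅w, x⁆`, and it has at
most `|G : C_G(g)| = p` elements; so the `p` commutators `⁅w, x⁆` form a subgroup `K_x` of order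
`p`. Two non-central `u, v` have a common non-commuting partner `w`, since a group is not the
union of two proper subgroups, and subgroups of order `p` sharing `⁅w, u⁆ ≠ 1` coincide; thus
`K_u = K_w = K_v`, and this single subgroup is `G'`.

Conversely, `w ↦ ⁅w, x⁆` takes `|G : C_G(x)|` values in `G'`, and a power of `p` other than `1`
that is at most `p` equals `p`.
-/

open Subgroup
open scoped commutatorElement

section General

variable {G : Type*} [Group G]

theorem natCard_range_commutatorElement_left (x : G) :
    Nat.card (Set.range fun w : G => ⁅w, x⁆) = (centralizer {x}).index := by
  have hrange : (Set.range fun w : G => ⁅w, x⁆) =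
      Set.range (Subtype.val ∘ quotientCentralizerEmbedding x) := by
    ext y
    simp [QuotientGroup.mk_surjective.exists, quotientCentralizerEmbedding_apply]
  rw [hrange, Nat.card_range_of_injective
    (Subtype.val_injective.comp (quotientCentralizerEmbedding x).injective), index]

theorem commutatorElement_mul_left_of_commute {w c x : G} (h : Commute c x) :
    ⁅w * c, x⁆ = ⁅w, x⁆ := by
  simp only [commutatorElement_def, mul_inv_rev, mul_assoc, h.eq, mul_inv_cancel_left]

theorem Subgroup.isCoatom_of_index_prime {H : Subgroup G} (hH : H.index.Prime) : IsCoatom H := by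
  have : H.FiniteIndex := ⟨hH.ne_zero⟩
  refine ⟨fun h => hH.ne_one (index_eq_one.mpr h), fun K hK => index_eq_one.mp ?_⟩
  exact (hH.eq_one_or_self_of_dvd _ (index_dvd_of_le hK.le)).resolve_right
    (index_strictAnti hK).ne

theorem Subgroup.exists_notMem_notMem {H K : Subgroup G} (hH : H ≠ ⊤) (hK : K ≠ ⊤) :
    ∃ w, w ∉ H ∧ w ∉ K := by
  obtain ⟨a, haH⟩ : ∃ a, a ∉ H := by simpa [eq_top_iff'] using hH
  obtain ⟨b, hbK⟩ : ∃ b, b ∉ K := by simpa [eq_top_iff'] using hK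
  by_cases haK : a ∈ K
  · by_cases hbH : b ∈ H
    · exact ⟨a * b, by rwa [H.mul_mem_cancel_right hbH], by rwa [K.mul_mem_cancel_left haK]⟩
    · exact ⟨b, hbH, hbK⟩
  · exact ⟨a, haH, haK⟩

theorem Subgroup.zpowers_eq_of_card_eq_prime {p : ℕ} (hp : p.Prime) {K : Subgroup G}
    (hK : Nat.card K = p) {t : G} (htK : t ∈ K) (ht : t ≠ 1) : zpowers t = K := by
  have : Finite K := Nat.finite_of_card_ne_zero (hK ▸ hp.ne_zero)
  have hord : orderOf t = p :=
    (hp.eq_one_or_self_of_dvd _ (hK ▸ K.orderOf_dvd_natCard htK)).resolve_left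
      (by rwa [orderOf_eq_one_iff])
  exact eq_of_le_of_card_ge (zpowers_le.mpr htK) (by rw [hK, Nat.card_zpowers, hord])

theorem Subgroup.normalClosure_le_centralizer_self {x : G}
    (h : normalClosure {x} ≤ centralizer {x}) :
    normalClosure {x} ≤ centralizer (normalClosure {x} : Set G) :=
  normalClosure_le_normal <| Set.singleton_subset_iff.mpr <|
    mem_centralizer_iff.mpr fun _ ha => mem_centralizer_singleton_iff.mp (h ha)

def Subgroup.commutatorRightHom (A : Subgroup G) [hAn : A.Normal]
    (hA : A ≤ centralizer (A : Set G)) (g : G) : A →* G :=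
  MonoidHom.mk' (fun a => ⁅(a : G), g⁆) fun a b => by
    have hmem : ∀ c : A, ⁅(c : G), g⁆ ∈ A := fun c => by
      rw [show ⁅(c : G), g⁆ = c * (g * (c : G)⁻¹ * g⁻¹) by group]
      exact A.mul_mem c.2 (hAn.conj_mem _ (inv_mem c.2) g)
    have hcomm : ∀ c : A, ∀ y ∈ A, (c : G) * y = y * c := fun c y hy =>
      mem_centralizer_iff.mp (hA c.2) y hy |>.symm
    calc ⁅(a : G) * b, g⁆ = a * ⁅(b : G), g⁆ * (a : G)⁻¹ * ⁅(a : G), g⁆ := by group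
      _ = ⁅(b : G), g⁆ * ⁅(a : G), g⁆ := by rw [hcomm a _ (hmem b), mul_inv_cancel_right]
      _ = ⁅(a : G), g⁆ * ⁅(b : G), g⁆ := hcomm ⟨_, hmem b⟩ _ (hmem a)

theorem range_commutatorElement_subset_range_commutatorRightHom [Finite G] {x g : G}
    [(centralizer {x}).Normal] (hA : normalClosure {x} ≤ centralizer (normalClosure {x} : Set G))
    (hg : zpowers g ⊔ centralizer {x} = ⊤) :
    (Set.range fun w : G => ⁅w, x⁆) ⊆ ((normalClosure {x}).commutatorRightHom hA g).range := by
  set K := ((normalClosure {x}).commutatorRightHom hA g).range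
  have hxA : x ∈ normalClosure {x} := subset_normalClosure rfl
  have hpow : ∀ n : ℕ, ⁅g ^ n, x⁆ ∈ K := by
    intro n
    induction n with
    | zero => simp [K.one_mem]
    | succ n ih =>
      rw [pow_succ', show ⁅g * g ^ n, x⁆ = ⁅g ^ n * x * (g ^ n)⁻¹, g⁆⁻¹ * ⁅g ^ n, x⁆ by group]
      exact K.mul_mem (K.inv_mem ⟨⟨_, normalClosure_normal.conj_mem x hxA _⟩, rfl⟩) ih
  rintro _ ⟨w, rfl⟩
  obtain ⟨y, hy, c, hc, rfl⟩ := mem_sup_of_normal_right.mp (hg ▸ mem_top w)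
  obtain ⟨n, rfl⟩ := mem_powers_iff_mem_zpowers.mpr hy
  change ⁅g ^ n * c, x⁆ ∈ K
  rw [commutatorElement_mul_left_of_commute (mem_centralizer_singleton_iff.mp hc)]
  exact hpow n

theorem IsPGroup.normal_of_index_eq {p : ℕ} [hp : Fact p.Prime] [Finite G] (hG : IsPGroup p G)
    {H : Subgroup G} (hH : H.index = p) : H.Normal := by
  obtain ⟨n, hn⟩ := IsPGroup.iff_card.mp hG
  apply normal_of_index_eq_minFac_card
  have hn0 : n ≠ 0 := by
    rintro rfl
    have := hH ▸ H.index_dvd_card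
    rw [hn, pow_zero, Nat.dvd_one] at this
    exact hp.out.ne_one this
  rw [hH, hn, hp.out.pow_minFac hn0]

end General

def ElementBreadthLeOne (p : ℕ) (G : Type*) [Group G] : Prop :=
  ∀ x : G, x ∉ center G → (centralizer {x}).index = p

section BreadthOne

variable {G : Type*} [Group G] [Finite G] {p : ℕ} [hp : Fact p.Prime]

theorem exists_subgroup_coe_eq_range_commutatorElement (hG : IsPGroup p G)
    (hb : ElementBreadthLeOne p G) {x : G} (hx : x ∉ center G) :
    ∃ K : Subgroup G, Nat.card K = p ∧ (K : Set G) = Set.range fun w : G => ⁅w, x⁆ := by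
  obtain ⟨g, hgx⟩ : ∃ g, g ∉ centralizer {x} := by
    simpa [mem_center_iff, mem_centralizer_singleton_iff] using hx
  have hCx := hb x hx
  have hCg := hb g fun hg => hgx (center_le_centralizer _ hg)
  have := hG.normal_of_index_eq hCx
  have hA : normalClosure {x} ≤ centralizer (normalClosure {x} : Set G) :=
    normalClosure_le_centralizer_self <|
      normalClosure_le_normal (Set.singleton_subset_iff.mpr (mem_centralizer_singleton_iff.mpr rfl))
  have htop : zpowers g ⊔ centralizer {x} = ⊤ :=
    (isCoatom_of_index_prime (hCx ▸ hp.out)).2 _ <|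
      SetLike.lt_iff_le_and_exists.mpr ⟨le_sup_right, g, mem_sup_left (mem_zpowers g), hgx⟩
  set K := ((normalClosure {x}).commutatorRightHom hA g).range
  have hsub := range_commutatorElement_subset_range_commutatorRightHom hA htop
  have hKg : (K : Set G) ⊆ Set.range fun w : G => ⁅w, g⁆ := by
    rintro _ ⟨a, rfl⟩
    exact ⟨a, rfl⟩
  have hcard : Nat.card (Set.range fun w : G => ⁅w, x⁆) = p :=
    (natCard_range_commutatorElement_left x).trans hCx
  have hK : (K : Set G) = Set.range fun w : G => ⁅w, x⁆ := by
    refine (Set.eq_of_subset_of_ncard_le hsub ?_).symm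
    rw [← Nat.card_coe_set_eq, ← Nat.card_coe_set_eq, hcard,
      ← hCg, ← natCard_range_commutatorElement_left]
    exact Nat.card_mono (Set.toFinite _) hKg
  exact ⟨K, by rw [← hcard, ← hK]; rfl, hK⟩

theorem range_commutatorElement_eq_of_ne_one (hG : IsPGroup p G) (hb : ElementBreadthLeOne p G)
    {u w : G} (h : ⁅w, u⁆ ≠ 1) :
    (Set.range fun y : G => ⁅y, u⁆) = Set.range fun y : G => ⁅y, w⁆ := by
  have hu : u ∉ center G := fun hu =>
    h (commutatorElement_eq_one_iff_mul_comm.mpr (mem_center_iff.mp hu w))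
  have hw : w ∉ center G := fun hw =>
    h (commutatorElement_eq_one_iff_mul_comm.mpr (mem_center_iff.mp hw u).symm)
  obtain ⟨K, hK, hKu⟩ := exists_subgroup_coe_eq_range_commutatorElement hG hb hu
  obtain ⟨L, hL, hLw⟩ := exists_subgroup_coe_eq_range_commutatorElement hG hb hw
  have hmemK : ⁅w, u⁆ ∈ K := by
    rw [← SetLike.mem_coe, hKu]
    exact ⟨w, rfl⟩
  have hmemL : ⁅w, u⁆ ∈ L := by
    rw [← commutatorElement_inv]
    exact L.inv_mem (by rw [← SetLike.mem_coe, hLw]; exact ⟨u, rfl⟩)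
  rw [← hKu, ← hLw, ← zpowers_eq_of_card_eq_prime hp.out hK hmemK h,
    zpowers_eq_of_card_eq_prime hp.out hL hmemL h]

theorem range_commutatorElement_eq (hG : IsPGroup p G) (hb : ElementBreadthLeOne p G)
    {u v : G} (hu : u ∉ center G) (hv : v ∉ center G) :
    (Set.range fun y : G => ⁅y, u⁆) = Set.range fun y : G => ⁅y, v⁆ := by
  obtain ⟨w, hwu, hwv⟩ := exists_notMem_notMem (H := centralizer {u}) (K := centralizer {v})
    (fun h => hu (centralizer_eq_top_iff_subset.mp h rfl))
    (fun h => hv (centralizer_eq_top_iff_subset.mp h rfl))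
  rw [mem_centralizer_singleton_iff, ← commutatorElement_eq_one_iff_mul_comm] at hwu hwv
  exact (range_commutatorElement_eq_of_ne_one hG hb hwu).trans
    (range_commutatorElement_eq_of_ne_one hG hb hwv).symm

theorem card_commutator_eq_of_elementBreadthLeOne (hG : IsPGroup p G)
    (hb : ElementBreadthLeOne p G) {x₀ : G} (hx₀ : x₀ ∉ center G) :
    Nat.card (commutator G) = p := by
  obtain ⟨K, hK, hKx⟩ := exists_subgroup_coe_eq_range_commutatorElement hG hb hx₀
  suffices commutator G = K by rw [this, hK]
  rw [commutator_eq_closure]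
  apply le_antisymm
  · rw [closure_le]
    rintro _ ⟨a, b, rfl⟩
    by_cases hbc : b ∈ center G
    · rw [commutatorElement_eq_one_iff_mul_comm.mpr (mem_center_iff.mp hbc a)]
      exact K.one_mem
    · rw [hKx, ← range_commutatorElement_eq hG hb hbc hx₀]
      exact ⟨a, rfl⟩
  · intro k hk
    rw [← SetLike.mem_coe, hKx] at hk
    obtain ⟨w, rfl⟩ := hk
    exact subset_closure ⟨w, x₀, rfl⟩

theorem elementBreadthLeOne_of_card_commutator (hG : IsPGroup p G)
    (h : Nat.card (commutator G) = p) : ElementBreadthLeOne p G := by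
  intro x hx
  have hle : (centralizer {x}).index ≤ p := by
    rw [← natCard_range_commutatorElement_left, ← h]
    refine Nat.card_mono (Set.toFinite _) ?_
    rw [commutator_eq_closure]
    rintro _ ⟨w, rfl⟩
    exact subset_closure ⟨w, x, rfl⟩
  have hne : (centralizer {x}).index ≠ 1 := by
    rw [Ne, index_eq_one, centralizer_eq_top_iff_subset]
    simpa using hx
  obtain ⟨n, hn⟩ := hG.index (centralizer {x})
  rw [hn] at hle hne ⊢
  have : n ≤ 1 := (Nat.pow_le_pow_iff_right hp.out.one_lt).mp (by rwa [pow_one])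
  interval_cases n <;> simp_all

end BreadthOne

/-- A finite `p`-group has element breadth 1 iff its derived subgroup has order `p`. -/
theorem stmt_2 (p : ℕ) (hp : p.Prime) (G : Type*) [Group G] [Finite G]
    (hG : IsPGroup p G) :
    ((∀ x : G, x ∉ Subgroup.center G → (Subgroup.centralizer {x}).index = p) ∧
      ∃ x : G, x ∉ Subgroup.center G) ↔
    Nat.card (commutator G) = p := by
  have := Fact.mk hp
  constructor
  · rintro ⟨hb, x₀, hx₀⟩
    exact card_commutator_eq_of_elementBreadthLeOne hG hb hx₀
  · intro h
    refine ⟨elementBreadthLeOne_of_card_commutator hG h, ?_⟩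
    by_contra! hc
    rw [(commutator_eq_bot_iff_center_eq_top G).mpr ((eq_top_iff' _).mpr hc), card_bot] at h
    exact hp.ne_one h.symm
end

section
/- Let G be a finite 2-group in which every subgroup has at most 2 conjugates, Z(G) is cyclic, and all involutions of G commute with each other. Then G contains at most three involutions. -/
/-!
The centre is a nontrivial cyclic 2-group, so it contains a unique involution `z`. For an
involution `x` the normalizer of `⟨x⟩` is the centralizer of `x`, so a non-central involution has
exactly two conjugates, `x` and some `w`; since `x` and `w` commute, `x * w` is a central
involution, i.e. `w = x * z`. Given four involutions, pick non-central `a`, `b` with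
`b ∉ {a, a * z}`. The Klein group `K = {1, a, b, a * b}` does not contain `z`, so its normalizer
lies in `C(a) ⊓ C(b)`. Breadth one forces this to have index at most 2, hence `C(a) = C(b)`: every
element either fixes both `a` and `b` or multiplies both by `z`, so `a * b` is central, i.e.
`a * b = z`, which contradicts the choice of `b`.
-/

open Subgroup

theorem exists_ne_of_three_lt_card {α : Type*} {p : α → Prop} (h : 3 < Nat.card {x // p x})
    (u v w : α) : ∃ x, p x ∧ x ≠ u ∧ x ≠ v ∧ x ≠ w := by
  classical
  by_contra! hs
  have hsub (x : α) (hx : p x) : x ∈ ({u, v, w} : Finset α) := by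
    simp only [Finset.mem_insert, Finset.mem_singleton]
    tauto
  have hle : Nat.card {x // p x} ≤ Nat.card ({u, v, w} : Finset α) :=
    Nat.card_le_card_of_injective (fun x => ⟨x, hsub x x.2⟩)
      fun x y hxy => Subtype.ext (congrArg Subtype.val hxy :)
  rw [Nat.card_eq_finsetCard] at hle
  exact h.not_ge (hle.trans Finset.card_le_three)

theorem IsPGroup.exists_orderOf_eq_mem_center {p : ℕ} [Fact p.Prime] {G : Type*} [Group G]
    [Finite G] [Nontrivial G] (hG : IsPGroup p G) : ∃ z ∈ center G, orderOf z = p := by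
  have := hG.center_nontrivial
  have hdvd : p ∣ Nat.card (center G) :=
    ((hG.to_subgroup _).card_eq_or_dvd).resolve_left Finite.one_lt_card.ne'
  obtain ⟨z, hz⟩ := exists_prime_orderOf_dvd_card' p hdvd
  exact ⟨z, z.2, by rwa [orderOf_coe]⟩

theorem IsCyclic.eq_of_orderOf_eq_two {α : Type*} [Group α] [Finite α] [IsCyclic α] {x y : α}
    (hx : orderOf x = 2) (hy : orderOf y = 2) : x = y := by
  classical
  have := Fintype.ofFinite α
  have h := IsCyclic.card_orderOf_eq_totient (hx ▸ orderOf_dvd_card (x := x))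
  rw [Nat.totient_two] at h
  exact Finset.card_le_one.mp h.le x (by simpa using hx) y (by simpa using hy)

section Involutions

variable {G : Type*} [Group G]

theorem orderOf_conj (g x : G) : orderOf (g * x * g⁻¹) = orderOf x := by
  simpa using MulEquiv.orderOf_eq (MulAut.conj g) x

theorem conj_eq_self_iff_mem_centralizer {g x : G} :
    g * x * g⁻¹ = x ↔ g ∈ centralizer {x} := by
  rw [mul_inv_eq_iff_eq_mul, mem_centralizer_singleton_iff]

theorem centralizer_singleton_ne_top {x : G} (hx : x ∉ center G) : centralizer {x} ≠ ⊤ := by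
  rwa [Ne, centralizer_eq_top_iff_subset, Set.singleton_subset_iff]

theorem orderOf_mul_eq_two_of_commute {a b : G} (ha : orderOf a = 2) (hb : orderOf b = 2)
    (hab : Commute a b) (hne : a ≠ b) : orderOf (a * b) = 2 := by
  rw [orderOf_eq_prime_iff] at ha hb ⊢
  refine ⟨by rw [hab.mul_pow, ha.1, hb.1, one_mul], fun h => hne ?_⟩
  rw [eq_inv_of_mul_eq_one_left h, inv_eq_self_of_orderOf_eq_two (orderOf_eq_prime hb.1 hb.2)]

theorem normalizer_zpowers_le_centralizer {x : G} (hx : orderOf x = 2) :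
    normalizer (zpowers x : Set G) ≤ centralizer {x} := by
  classical
  intro g hg
  have hmem : g * x * g⁻¹ ∈ zpowers x := (mem_normalizer_iff.mp hg x).mp (mem_zpowers x)
  have hfin : IsOfFinOrder x := orderOf_pos_iff.mp (by rw [hx]; norm_num)
  rw [hfin.mem_zpowers_iff_mem_range_orderOf, hx] at hmem
  simp only [Finset.range_add_one, Finset.range_zero, insert_empty_eq, Finset.image_insert,
    pow_one, Finset.image_singleton, pow_zero, Finset.mem_insert, Finset.mem_singleton,
    conj_eq_one_iff] at hmem
  exact hmem.resolve_right (orderOf_eq_prime_iff.mp hx).2 |> conj_eq_self_iff_mem_centralizer.mp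

theorem conj_eq_or_eq_of_index_centralizer_eq_two {x g₀ : G} (hC : (centralizer {x}).index = 2)
    (hg₀ : g₀ ∉ centralizer {x}) (g : G) : g * x * g⁻¹ = x ∨ g * x * g⁻¹ = g₀ * x * g₀⁻¹ := by
  by_cases hg : g ∈ centralizer {x}
  · exact Or.inl (conj_eq_self_iff_mem_centralizer.mpr hg)
  · have h : g₀⁻¹ * g ∈ centralizer {x} := by
      rw [mul_mem_iff_of_index_two hC, inv_mem_iff]; tauto
    right
    rw [← conj_eq_self_iff_mem_centralizer] at h
    calc g * x * g⁻¹ = g₀ * ((g₀⁻¹ * g) * x * (g₀⁻¹ * g)⁻¹) * g₀⁻¹ := by group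
      _ = g₀ * x * g₀⁻¹ := by rw [h]

theorem mul_conj_mem_center {x g₀ : G} (hx : ∀ g, g * x * g⁻¹ = x ∨ g * x * g⁻¹ = g₀ * x * g₀⁻¹)
    (hne : g₀ * x * g₀⁻¹ ≠ x) (hcomm : Commute x (g₀ * x * g₀⁻¹)) :
    x * (g₀ * x * g₀⁻¹) ∈ center G := by
  rw [mem_center_iff]
  intro k
  rw [← mul_inv_eq_iff_eq_mul]
  have hinj : k * x * k⁻¹ ≠ (k * g₀) * x * (k * g₀)⁻¹ := by
    rw [show (k * g₀) * x * (k * g₀)⁻¹ = k * (g₀ * x * g₀⁻¹) * k⁻¹ by group]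
    simpa using hne.symm
  calc k * (x * (g₀ * x * g₀⁻¹)) * k⁻¹ = (k * x * k⁻¹) * ((k * g₀) * x * (k * g₀)⁻¹) := by group
    _ = x * (g₀ * x * g₀⁻¹) := by
      rcases hx k with h₁ | h₁ <;> rcases hx (k * g₀) with h₂ | h₂ <;> rw [h₁, h₂] at hinj ⊢ <;>
        first | exact (hinj rfl).elim | rfl | exact hcomm.eq.symm

theorem Subgroup.eq_of_le_of_index_le_two {H K : Subgroup G} [H.FiniteIndex] (hle : H ≤ K)
    (hK : K ≠ ⊤) (hH : H.index ≤ 2) : H = K := by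
  by_contra hne
  have := index_strictAnti (lt_of_le_of_ne hle hne)
  have : K.FiniteIndex := finiteIndex_of_le hle
  have := one_lt_index_of_ne_top hK
  omega

end Involutions

section KleinFour

variable {G : Type*} [Group G]

def kleinFour {a b : G} (ha : orderOf a = 2) (hb : orderOf b = 2) (hab : Commute a b) :
    Subgroup G where
  carrier := {1, a, b, a * b}
  one_mem' := by simp
  mul_mem' := by
    have ha' : a * a = 1 := by rw [← pow_two, ← ha, pow_orderOf_eq_one]
    have hb' : b * b = 1 := by rw [← pow_two, ← hb, pow_orderOf_eq_one]
    have haa (x : G) : a * (a * x) = x := by rw [← mul_assoc, ha', one_mul]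
    have hba (x : G) : b * (a * x) = a * (b * x) := by rw [← mul_assoc, ← hab.eq, mul_assoc]
    rintro x y hx hy
    simp only [Set.mem_insert_iff, Set.mem_singleton_iff] at hx hy ⊢
    rcases hx with rfl | rfl | rfl | rfl <;> rcases hy with rfl | rfl | rfl | rfl <;>
      simp [mul_assoc, ha', hb', haa, hba, ← hab.eq]
  inv_mem' := by
    rintro x (rfl | rfl | rfl | rfl) <;>
      simp [inv_eq_self_of_orderOf_eq_two, ha, hb, hab.eq]

variable {a b : G} (ha : orderOf a = 2) (hb : orderOf b = 2) (hab : Commute a b)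

theorem mem_kleinFour {x : G} : x ∈ kleinFour ha hb hab ↔ x = 1 ∨ x = a ∨ x = b ∨ x = a * b :=
  Iff.rfl

theorem left_mem_kleinFour : a ∈ kleinFour ha hb hab := by simp [mem_kleinFour]

theorem right_mem_kleinFour : b ∈ kleinFour ha hb hab := by simp [mem_kleinFour]

theorem notMem_kleinFour {z : G} (hz1 : z ≠ 1) (hza : z ≠ a) (hzb : z ≠ b) (hbz : b ≠ a * z) :
    z ∉ kleinFour ha hb hab := by
  rw [mem_kleinFour]
  rintro (h | h | h | h)
  exacts [hz1 h, hza h, hzb h,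
    hbz (by rw [h, ← mul_assoc, ← pow_two, ← ha, pow_orderOf_eq_one, one_mul])]

end KleinFour

section BreadthOne

variable {G : Type*} [Group G]

theorem eq_of_orderOf_eq_two_of_mem_center [Finite G] [IsCyclic (center G)] {w z : G}
    (hw : w ∈ center G) (hz : z ∈ center G) (hw2 : orderOf w = 2) (hz2 : orderOf z = 2) :
    w = z :=
  congrArg Subtype.val (IsCyclic.eq_of_orderOf_eq_two (x := ⟨w, hw⟩) (y := ⟨z, hz⟩)
    (by rwa [orderOf_mk]) (by rwa [orderOf_mk]))

theorem index_centralizer_eq_two [Finite G]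
    (hsbr : ∀ H : Subgroup G, (normalizer (H : Set G)).index ≤ 2) {x : G} (hx : orderOf x = 2)
    (hxc : x ∉ center G) : (centralizer {x}).index = 2 :=
  le_antisymm ((index_antitone (normalizer_zpowers_le_centralizer hx)).trans (hsbr _))
    (one_lt_index_of_ne_top (centralizer_singleton_ne_top hxc))

theorem conj_eq_or_eq_mul_of_index_centralizer_eq_two
    (hcomm : ∀ s t : G, orderOf s = 2 → orderOf t = 2 → s * t = t * s) {z : G}
    (hz : ∀ w ∈ center G, orderOf w = 2 → w = z) {x : G} (hx : orderOf x = 2)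
    (hC : (centralizer {x}).index = 2) (g : G) : g * x * g⁻¹ = x ∨ g * x * g⁻¹ = x * z := by
  obtain ⟨g₀, hg₀⟩ := SetLike.exists_not_mem_of_ne_top (centralizer {x})
    (mt index_eq_one.mpr (by omega))
  have hconj := conj_eq_or_eq_of_index_centralizer_eq_two hC hg₀
  have hne : g₀ * x * g₀⁻¹ ≠ x := mt conj_eq_self_iff_mem_centralizer.mp hg₀
  have hw : orderOf (g₀ * x * g₀⁻¹) = 2 := (orderOf_conj g₀ x).trans hx
  have hxw : Commute x (g₀ * x * g₀⁻¹) := hcomm _ _ hx hw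
  have hcen : x * (g₀ * x * g₀⁻¹) = z :=
    hz _ (mul_conj_mem_center hconj hne hxw) (orderOf_mul_eq_two_of_commute hx hw hxw hne.symm)
  rw [← hcen, ← mul_assoc, ← pow_two, ← hx, pow_orderOf_eq_one, one_mul]
  exact hconj g

theorem normalizer_le_centralizer_of_conj {K : Subgroup G} {a z : G} (hzK : z ∉ K) (haK : a ∈ K)
    (ha : ∀ g, g * a * g⁻¹ = a ∨ g * a * g⁻¹ = a * z) :
    normalizer (K : Set G) ≤ centralizer {a} := by
  intro g hg
  rw [← conj_eq_self_iff_mem_centralizer]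
  refine (ha g).resolve_right fun h => hzK ?_
  have hmem : a * z ∈ K := h ▸ (mem_normalizer_iff.mp hg a).mp haK
  simpa using mul_mem (inv_mem haK) hmem

theorem centralizer_eq_of_index_normalizer_le_two [Finite G] {K : Subgroup G} {a b z : G}
    (hK : (normalizer (K : Set G)).index ≤ 2) (hzK : z ∉ K) (haK : a ∈ K) (hbK : b ∈ K)
    (ha : ∀ g, g * a * g⁻¹ = a ∨ g * a * g⁻¹ = a * z)
    (hb : ∀ g, g * b * g⁻¹ = b ∨ g * b * g⁻¹ = b * z)
    (hac : a ∉ center G) (hbc : b ∉ center G) : centralizer {a} = centralizer {b} := by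
  have hD : (centralizer {a} ⊓ centralizer {b}).index ≤ 2 :=
    (index_antitone (le_inf (normalizer_le_centralizer_of_conj hzK haK ha)
      (normalizer_le_centralizer_of_conj hzK hbK hb))).trans hK
  exact (eq_of_le_of_index_le_two inf_le_left (centralizer_singleton_ne_top hac) hD).symm.trans
    (eq_of_le_of_index_le_two inf_le_right (centralizer_singleton_ne_top hbc) hD)

theorem mul_mem_center_of_centralizer_eq {a b z : G} (hz : z ∈ center G) (hzz : z ^ 2 = 1)
    (ha : ∀ g, g * a * g⁻¹ = a ∨ g * a * g⁻¹ = a * z)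
    (hb : ∀ g, g * b * g⁻¹ = b ∨ g * b * g⁻¹ = b * z)
    (hC : centralizer {a} = centralizer {b}) : a * b ∈ center G := by
  rw [mem_center_iff]
  intro g
  rw [← mul_inv_eq_iff_eq_mul]
  calc g * (a * b) * g⁻¹ = (g * a * g⁻¹) * (g * b * g⁻¹) := by group
    _ = a * b := by
      by_cases hg : g ∈ centralizer {a}
      · rw [conj_eq_self_iff_mem_centralizer.mpr hg,
          conj_eq_self_iff_mem_centralizer.mpr (hC ▸ hg)]
      · rw [(ha g).resolve_left (mt conj_eq_self_iff_mem_centralizer.mp hg),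
          (hb g).resolve_left (mt conj_eq_self_iff_mem_centralizer.mp (hC ▸ hg)),
          mul_assoc, ← mul_assoc z, (mem_center_iff.mp hz b).symm, mul_assoc, ← pow_two, hzz,
          mul_one]

end BreadthOne

/-- A finite 2-group of subgroup breadth at most 1 with cyclic center in which all
involutions commute contains at most three involutions. -/
theorem stmt_8 (G : Type*) [Group G] [Finite G] (hG : IsPGroup 2 G)
    (hsbr : ∀ H : Subgroup G, (Subgroup.normalizer (H : Set G)).index ≤ 2)
    (hZ : IsCyclic (Subgroup.center G))
    (hcomm : ∀ s t : G, orderOf s = 2 → orderOf t = 2 → s * t = t * s) :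
    Nat.card {x : G // orderOf x = 2} ≤ 3 := by
  by_contra! hcard
  obtain ⟨x, hx, -⟩ := exists_ne_of_three_lt_card hcard 1 1 1
  have : Nontrivial G := ⟨x, 1, (orderOf_eq_prime_iff.mp hx).2⟩
  have := hZ
  obtain ⟨z, hzc, hz⟩ := hG.exists_orderOf_eq_mem_center
  have hnc (x : G) (hx : orderOf x = 2) (hxz : x ≠ z) : x ∉ center G :=
    fun hxc => hxz (eq_of_orderOf_eq_two_of_mem_center hxc hzc hx hz)
  have hconj (x : G) (hx : orderOf x = 2) (hxz : x ≠ z) :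
      ∀ g, g * x * g⁻¹ = x ∨ g * x * g⁻¹ = x * z :=
    conj_eq_or_eq_mul_of_index_centralizer_eq_two hcomm
      (fun w hwc hw => eq_of_orderOf_eq_two_of_mem_center hwc hzc hw hz) hx
      (index_centralizer_eq_two hsbr hx (hnc x hx hxz))
  obtain ⟨a, ha, haz, -, -⟩ := exists_ne_of_three_lt_card hcard z z z
  obtain ⟨b, hb, hbz, hba, hbaz⟩ := exists_ne_of_three_lt_card hcard z a (a * z)
  have hab : Commute a b := hcomm a b ha hb
  have hzK : z ∉ kleinFour ha hb hab :=
    notMem_kleinFour ha hb hab (orderOf_eq_prime_iff.mp hz).2 haz.symm hbz.symm hbaz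
  have hC := centralizer_eq_of_index_normalizer_le_two (hsbr _) hzK (left_mem_kleinFour ..)
    (right_mem_kleinFour ..) (hconj a ha haz) (hconj b hb hbz) (hnc a ha haz) (hnc b hb hbz)
  have habz : a * b ≠ z := fun h =>
    hzK (h ▸ mul_mem (left_mem_kleinFour ..) (right_mem_kleinFour ..))
  exact hnc _ (orderOf_mul_eq_two_of_commute ha hb hab hba.symm) habz
    (mul_mem_center_of_centralizer_eq hzc (hz ▸ pow_orderOf_eq_one z) (hconj a ha haz)
      (hconj b hb hbz) hC)
end

section
/- Let G be a finite 2-group with two non-commuting involutions s and t such that every subgroup of G has at most 2 conjugates. Then ⟨s, t⟩ is isomorphic to the dihedral group D8 of order 8, and ⟨s, t⟩ is normal in G. -/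
/-!
For an involution `s`, the normalizer of `⟨s⟩` is the centralizer `C(s)`, so breadth at most 1
gives `[G : C(s)] ≤ 2`, with equality as soon as some `t` does not commute with `s`. Then
`(st)² ∈ C(s)`; since `s` also inverts `st`, this forces `(st)⁴ = 1`, so `st` has order 4 and the
two involutions `s`, `t` generate a copy of `D₈`. Every `g` lies in `C(s)` or in `t C(s)`, so the
conjugates of `s` are `s` and `tst⁻¹`; the same holds for `t`, hence `⟨s, t⟩` is normal.
-/

open Subgroup

section ZModPow

variable {G : Type*} [Group G] {n : ℕ} [NeZero n] {a : G}

lemma pow_zmod_val_add (ha : a ^ n = 1) (i j : ZMod n) :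
    a ^ (i + j).val = a ^ i.val * a ^ j.val := by
  rw [ZMod.val_add, ← pow_eq_pow_mod _ ha, pow_add]

lemma pow_zmod_val_neg (ha : a ^ n = 1) (i : ZMod n) : a ^ (-i).val = (a ^ i.val)⁻¹ :=
  eq_inv_of_mul_eq_one_left (by rw [← pow_zmod_val_add ha, neg_add_cancel, ZMod.val_zero, pow_zero])

end ZModPow

section Involutions

variable {G : Type*} [Group G] {s t a x : G}

lemma mul_self_eq_one_of_orderOf_eq_two (hs : orderOf s = 2) : s * s = 1 := by
  rw [← sq, ← hs, pow_orderOf_eq_one]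

lemma eq_one_or_eq_of_mem_zpowers (ha : a ^ 2 = 1) (hx : x ∈ zpowers a) : x = 1 ∨ x = a := by
  obtain ⟨k, rfl⟩ := mem_zpowers_iff.mp hx
  rw [zpow_eq_zpow_emod' k ha]
  rcases Int.emod_two_eq k with h | h <;> simp [h]

lemma mul_mul_pow_mul_self (hs : s * s = 1) (ht : t * t = 1) (k : ℕ) :
    s * (s * t) ^ k * s = ((s * t) ^ k)⁻¹ := by
  have hs' : s⁻¹ = s := inv_eq_of_mul_eq_one_right hs
  have ht' : t⁻¹ = t := inv_eq_of_mul_eq_one_right ht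
  calc s * (s * t) ^ k * s = (s * (s * t) * s⁻¹) ^ k := by rw [conj_pow, hs']
    _ = ((s * t) ^ k)⁻¹ := by rw [hs', ← mul_assoc, hs, one_mul, ← inv_pow, mul_inv_rev, hs', ht']

lemma notMem_zpowers_mul (hs : orderOf s = 2) (ht : orderOf t = 2) : s ∉ zpowers (s * t) := by
  -- `s` would commute with `s * t` while inverting it, so `(s * t) ^ 2 = 1` and `s ∈ {1, s * t}`.
  intro hmem
  have hs2 := mul_self_eq_one_of_orderOf_eq_two hs
  have ht2 := mul_self_eq_one_of_orderOf_eq_two ht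
  obtain ⟨k, hk⟩ := mem_zpowers_iff.mp hmem
  have hcomm : Commute ((s * t) ^ k) (s * t) := (Commute.refl (s * t)).zpow_left k
  rw [hk] at hcomm
  have hsq : (s * t) ^ 2 = 1 := by
    have h := mul_mul_pow_mul_self hs2 ht2 1
    rw [pow_one, hcomm.eq, mul_assoc, hs2, mul_one] at h
    rw [sq, mul_eq_one_iff_eq_inv]
    exact h
  rcases eq_one_or_eq_of_mem_zpowers hsq hmem with h | h
  · simp [h] at hs
  · have : t = 1 := by simpa using h
    simp [this] at ht

lemma orderOf_mul_eq_four (hs : s * s = 1) (ht : t * t = 1)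
    (hst : s * t ≠ t * s) (hcomm : (s * t) ^ 2 * s = s * (s * t) ^ 2) : orderOf (s * t) = 4 := by
  have hconj := mul_mul_pow_mul_self hs ht 2
  rw [← hcomm, mul_assoc, hs, mul_one] at hconj
  refine orderOf_eq_prime_pow (p := 2) (n := 1) (fun hsq ↦ hst ?_) ?_
  · rw [pow_one, sq] at hsq
    rw [eq_inv_of_mul_eq_one_left hsq, mul_inv_rev, inv_eq_of_mul_eq_one_right hs,
      inv_eq_of_mul_eq_one_right ht]
  · rw [show 2 ^ (1 + 1) = 2 + 2 from rfl, pow_add, mul_eq_one_iff_eq_inv]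
    exact hconj

end Involutions

namespace DihedralGroup

variable {n : ℕ} [NeZero n]

lemma closure_sr_zero_sr_one :
    closure {sr 0, sr 1} = (⊤ : Subgroup (DihedralGroup n)) := by
  refine eq_top_iff.mpr fun x _ ↦ ?_
  have hsr : sr 0 ∈ closure {sr (0 : ZMod n), sr 1} := subset_closure (by simp)
  have hr : ∀ i : ZMod n, r i ∈ closure {sr (0 : ZMod n), sr 1} := fun i ↦ by
    have hr1 : r 1 ∈ closure {sr (0 : ZMod n), sr 1} := by
      simpa [sr_mul_sr] using mul_mem hsr (subset_closure (by simp : sr 1 ∈ _))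
    simpa [r_one_pow] using pow_mem hr1 i.val
  rcases x with i | i
  · exact hr i
  · simpa [sr_mul_r] using mul_mem hsr (hr i)

variable {G : Type*} [Group G]

def lift (s t : G) (hs : s * s = 1) (ht : t * t = 1) (hst : (s * t) ^ n = 1) :
    DihedralGroup n →* G where
  toFun
    | r i => (s * t) ^ i.val
    | sr i => s * (s * t) ^ i.val
  map_one' := by rw [one_def]; simp
  map_mul' := by
    have hcomm (i : ZMod n) : (s * t) ^ i.val * s = s * (s * t) ^ (-i).val := by
      rw [pow_zmod_val_neg hst, ← mul_mul_pow_mul_self hs ht, ← mul_assoc, ← mul_assoc, hs,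
        one_mul]
    rintro (i | i) (j | j)
    · simp only [r_mul_r, pow_zmod_val_add hst]
    · simp only [r_mul_sr, sub_eq_neg_add, pow_zmod_val_add hst, ← mul_assoc, hcomm]
    · simp only [sr_mul_r, pow_zmod_val_add hst, mul_assoc]
    · simp only [sr_mul_sr, sub_eq_neg_add, pow_zmod_val_add hst]
      rw [mul_assoc, ← mul_assoc _ s, hcomm, ← mul_assoc, ← mul_assoc, hs, one_mul]

variable {s t : G} {hs : s * s = 1} {ht : t * t = 1} {hst : (s * t) ^ n = 1}

@[simp]
lemma lift_r (i : ZMod n) : lift s t hs ht hst (r i) = (s * t) ^ i.val := rfl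

@[simp]
lemma lift_sr (i : ZMod n) : lift s t hs ht hst (sr i) = s * (s * t) ^ i.val := rfl

lemma range_lift : (lift s t hs ht hst).range = closure {s, t} := by
  have hsr1 : lift s t hs ht hst (sr 1) = t := by
    rw [lift_sr, ZMod.val_one_eq_one_mod, ← pow_eq_pow_mod _ hst, pow_one, ← mul_assoc, hs, one_mul]
  rw [MonoidHom.range_eq_map, ← closure_sr_zero_sr_one, MonoidHom.map_closure, Set.image_pair,
    hsr1, lift_sr, ZMod.val_zero, pow_zero, mul_one]

lemma lift_injective (hn : orderOf (s * t) = n) (hs' : s ∉ zpowers (s * t)) :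
    Function.Injective (lift s t hs ht hst) := by
  rw [injective_iff_map_eq_one]
  rintro (i | i) h
  · rw [lift_r] at h
    have hdvd : n ∣ i.val := (dvd_of_eq hn.symm).trans (orderOf_dvd_of_pow_eq_one h)
    rw [(ZMod.val_eq_zero i).mp (Nat.eq_zero_of_dvd_of_lt hdvd (ZMod.val_lt i)), r_zero]
  · refine absurd ?_ hs'
    have hinv := inv_mem (pow_mem (mem_zpowers (s * t)) i.val)
    rwa [← mul_eq_one_iff_eq_inv.mp h] at hinv

noncomputable def closurePairMulEquiv (hs : orderOf s = 2) (ht : orderOf t = 2)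
    (hn : orderOf (s * t) = n) : closure {s, t} ≃* DihedralGroup n :=
  ((MonoidHom.ofInjective (f := lift s t (mul_self_eq_one_of_orderOf_eq_two hs)
    (mul_self_eq_one_of_orderOf_eq_two ht) (hn ▸ pow_orderOf_eq_one _))
    (lift_injective hn (notMem_zpowers_mul hs ht))).trans (MulEquiv.subgroupCongr range_lift)).symm

end DihedralGroup

namespace Subgroup

variable {G : Type*} [Group G]

lemma normal_closure_of_forall_conj_mem {S : Set G}
    (h : ∀ g, ∀ x ∈ S, g * x * g⁻¹ ∈ closure S) : (closure S).Normal := by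
  have hle : normalClosure S ≤ closure S := (closure_le _).mpr fun y hy ↦ by
    obtain ⟨x, hx, hxy⟩ := Group.mem_conjugatesOfSet_iff.mp hy
    obtain ⟨g, rfl⟩ := isConj_iff.mp hxy
    exact h g x hx
  rw [← le_antisymm hle ((closure_le _).mpr subset_normalClosure)]
  infer_instance

variable {s t : G}

lemma normalizer_zpowers_le_centralizer (hs : orderOf s = 2) :
    normalizer (zpowers s : Set G) ≤ centralizer {s} := by
  intro g hg
  rw [mem_centralizer_singleton_iff]
  have hconj := (mem_normalizer_iff.mp hg s).mp (mem_zpowers s)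
  rcases eq_one_or_eq_of_mem_zpowers (hs ▸ pow_orderOf_eq_one s) hconj with h | h
  · simp [conj_eq_one_iff.mp h] at hs
  · exact mul_inv_eq_iff_eq_mul.mp h

lemma index_centralizer_eq_two [Finite G] (hs : orderOf s = 2)
    (hN : (normalizer (zpowers s : Set G)).index ≤ 2) (ht : t ∉ centralizer {s}) :
    (centralizer {s}).index = 2 := by
  have hne_one : (centralizer {s}).index ≠ 1 := fun h ↦ ht (index_eq_one.mp h ▸ mem_top t)
  have hle := Nat.le_of_dvd (Nat.pos_of_ne_zero index_ne_zero_of_finite)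
    (index_dvd_of_le (normalizer_zpowers_le_centralizer hs))
  have := (centralizer {s}).index_ne_zero_of_finite
  omega

lemma conj_mem_closure_pair_of_index_centralizer_eq_two (hC : (centralizer {s}).index = 2)
    (ht : t ∉ centralizer {s}) (g : G) : g * s * g⁻¹ ∈ closure {s, t} := by
  have hsmem : s ∈ closure {s, t} := subset_closure (Set.mem_insert s {t})
  by_cases hg : g ∈ centralizer {s}
  · rwa [mem_centralizer_singleton_iff.mp hg, mul_inv_cancel_right]
  · obtain ⟨c, hc, rfl⟩ : ∃ c ∈ centralizer {s}, g = t * c :=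
      ⟨t⁻¹ * g, (mul_mem_iff_of_index_two hC).mpr (iff_of_false (inv_mem_iff.not.mpr ht) hg),
        (mul_inv_cancel_left t g).symm⟩
    have htmem : t ∈ closure {s, t} := subset_closure (Set.mem_insert_of_mem s rfl)
    have hconj : t * c * s * (t * c)⁻¹ = t * s * t⁻¹ := calc
      t * c * s * (t * c)⁻¹ = t * (c * s) * c⁻¹ * t⁻¹ := by group
      _ = t * s * t⁻¹ := by rw [mem_centralizer_singleton_iff.mp hc]; group
    rw [hconj]
    exact mul_mem (mul_mem htmem hsmem) (inv_mem htmem)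

end Subgroup

theorem stmt_9_general (G : Type*) [Group G] [Finite G]
    (hsbr : ∀ H : Subgroup G, (Subgroup.normalizer (H : Set G)).index ≤ 2)
    (s t : G) (hs : orderOf s = 2) (ht : orderOf t = 2) (hst : s * t ≠ t * s) :
    Nonempty (Subgroup.closure {s, t} ≃* DihedralGroup 4) ∧
      (Subgroup.closure {s, t}).Normal := by
  have hts : t ∉ centralizer {s} := fun h ↦ hst (mem_centralizer_singleton_iff.mp h).symm
  have hst' : s ∉ centralizer {t} := fun h ↦ hst (mem_centralizer_singleton_iff.mp h)
  have hCs := index_centralizer_eq_two hs (hsbr _) hts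
  have hCt := index_centralizer_eq_two ht (hsbr _) hst'
  have h4 : orderOf (s * t) = 4 :=
    orderOf_mul_eq_four (mul_self_eq_one_of_orderOf_eq_two hs)
      (mul_self_eq_one_of_orderOf_eq_two ht) hst
      (mem_centralizer_singleton_iff.mp (sq_mem_of_index_two hCs _))
  refine ⟨⟨DihedralGroup.closurePairMulEquiv hs ht h4⟩, normal_closure_of_forall_conj_mem ?_⟩
  rintro g x (rfl | rfl)
  · exact conj_mem_closure_pair_of_index_centralizer_eq_two hCs hts g
  · rw [Set.pair_comm]
    exact conj_mem_closure_pair_of_index_centralizer_eq_two hCt hst' g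

/-- In a finite 2-group of subgroup breadth at most 1, two non-commuting involutions
generate a subgroup isomorphic to `D₈` which is normal. -/
theorem stmt_9 (G : Type*) [Group G] [Finite G] (hG : IsPGroup 2 G)
    (hsbr : ∀ H : Subgroup G, (Subgroup.normalizer (H : Set G)).index ≤ 2)
    (s t : G) (hs : orderOf s = 2) (ht : orderOf t = 2) (hst : s * t ≠ t * s) :
    Nonempty (Subgroup.closure {s, t} ≃* DihedralGroup 4) ∧
      (Subgroup.closure {s, t}).Normal :=
  stmt_9_general G hsbr s t hs ht hst
end

section
/- Let G be a finite p-group with an abelian subgroup A such that G/A is cyclic. Then |A| = |G'| · |A ∩ Z(G)|. -/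
/-!
Choose `g` with `G = A ⟨g⟩`. Since `A` is abelian and normal, `a ↦ ⁅a, g⁆` is a homomorphism
`A → G`. Its kernel is the centralizer of `g` in `A`, which is `A ∩ Z(G)` because `A` and `g`
generate `G`. Its image `N` is normalized by `A` and by `g`, hence normal, and modulo `N` the
images of `A` and `g` commute with each other, so they are central and `G / N` is abelian:
thus `N = G'`, and Lagrange's theorem for the homomorphism gives `|A| = |G'| · |A ∩ Z(G)|`.
-/

open scoped commutatorElement

section

open Subgroup

variable {G : Type*} [Group G]

lemma sup_zpowers_eq_top_of_zpowers_mk_eq_top {A : Subgroup G} [A.Normal] {g : G}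
    (hg : zpowers (QuotientGroup.mk' A g) = ⊤) : A ⊔ zpowers g = ⊤ := by
  rw [sup_comm, ← QuotientGroup.ker_mk' A, ← comap_map_eq, MonoidHom.map_zpowers, hg, comap_top]

lemma mem_center_of_sup_zpowers_eq_top {H : Subgroup G} {g x : G} (hgen : H ⊔ zpowers g = ⊤)
    (hH : ∀ h ∈ H, Commute x h) (hg : Commute x g) : x ∈ center G := by
  have hle : H ⊔ zpowers g ≤ centralizer {x} :=
    sup_le (fun h hh ↦ mem_centralizer_singleton_iff.mpr (hH h hh).symm.eq)
      (zpowers_le.mpr (mem_centralizer_singleton_iff.mpr hg.symm.eq))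
  rw [hgen] at hle
  exact mem_center_iff.mpr fun y ↦ mem_centralizer_singleton_iff.mp (hle (mem_top y))

lemma commutatorElement_mem_of_normal {A : Subgroup G} [A.Normal] {a : G} (ha : a ∈ A) (g : G) :
    ⁅a, g⁆ ∈ A :=
  commutator_le_left A ⊤ (commutator_mem_commutator ha (mem_top g))

lemma commutator_le_of_sup_zpowers_eq_top {A N : Subgroup G} [IsMulCommutative A] [N.Normal]
    {g : G} (hgen : A ⊔ zpowers g = ⊤) (hN : ∀ a ∈ A, ⁅a, g⁆ ∈ N) : commutator G ≤ N := by
  set π := QuotientGroup.mk' N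
  have hgen' : A.map π ⊔ zpowers (π g) = ⊤ := by
    rw [← MonoidHom.map_zpowers, ← Subgroup.map_sup, hgen,
      map_top_of_surjective _ (QuotientGroup.mk'_surjective N)]
  have hcomm : ∀ a ∈ A, Commute (π a) (π g) := fun a ha ↦ by
    rw [← commutatorElement_eq_one_iff_commute, ← map_commutatorElement]
    exact (QuotientGroup.eq_one_iff _).mpr (hN a ha)
  have hcenter : A.map π ⊔ zpowers (π g) ≤ center (G ⧸ N) := by
    refine sup_le ?_ (zpowers_le.mpr ?_)
    · rintro _ ⟨a, ha, rfl⟩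
      refine mem_center_of_sup_zpowers_eq_top hgen' ?_ (hcomm a ha)
      rintro _ ⟨b, hb, rfl⟩
      exact (show Commute a b from setLike_mul_comm ha hb).map π
    · refine mem_center_of_sup_zpowers_eq_top hgen' ?_ (Commute.refl _)
      rintro _ ⟨a, ha, rfl⟩
      exact (hcomm a ha).symm
  rw [hgen'] at hcenter
  rw [_root_.commutator_def, commutator_le]
  intro x _ y _
  rw [← QuotientGroup.ker_mk' N, MonoidHom.mem_ker, map_commutatorElement,
    commutatorElement_eq_one_iff_commute]
  exact mem_center_iff.mp (hcenter (mem_top (π y))) (π x)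

section CommutatorElementHom

variable (A : Subgroup G) [A.Normal] [IsMulCommutative A] (g : G)

def commutatorElementHom : A →* G where
  toFun a := ⁅(a : G), g⁆
  map_one' := commutatorElement_one_left g
  map_mul' a b := by
    have hb : ⁅(b : G), g⁆ ∈ A := commutatorElement_mem_of_normal b.2 g
    calc ⁅(a * b : G), g⁆ = a * ⁅(b : G), g⁆ * (a : G)⁻¹ * ⁅(a : G), g⁆ :=
          commutatorElement_mul_left_eq_conj_mul _ _ _
      _ = ⁅(b : G), g⁆ * ⁅(a : G), g⁆ := by rw [setLike_mul_comm a.2 hb]; group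
      _ = ⁅(a : G), g⁆ * ⁅(b : G), g⁆ :=
          setLike_mul_comm hb (commutatorElement_mem_of_normal a.2 g)

variable {A g}

lemma commutatorElementHom_apply (a : A) : commutatorElementHom A g a = ⁅(a : G), g⁆ := rfl

lemma range_commutatorElementHom_le : (commutatorElementHom A g).range ≤ A := by
  rintro _ ⟨a, rfl⟩
  exact commutatorElement_mem_of_normal a.2 g

lemma conj_mem_range_commutatorElementHom {x y : G} (hx : Commute x g)
    (hy : y ∈ (commutatorElementHom A g).range) :
    x * y * x⁻¹ ∈ (commutatorElementHom A g).range := by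
  obtain ⟨a, rfl⟩ := hy
  refine ⟨⟨x * a * x⁻¹, Normal.conj_mem ‹_› _ a.2 x⟩, ?_⟩
  rw [commutatorElementHom_apply, commutatorElementHom_apply, conjugate_commutatorElement,
    hx.eq, mul_inv_cancel_right]

lemma range_commutatorElementHom_normal (hgen : A ⊔ zpowers g = ⊤) :
    (commutatorElementHom A g).range.Normal := by
  set N := (commutatorElementHom A g).range
  have hA : A ≤ normalizer (N : Set G) :=
    (le_centralizer A).trans <| (centralizer_le range_commutatorElementHom_le).trans <|
      centralizer_le_normalizer _
  have hg : g ∈ normalizer (N : Set G) := mem_normalizer_iff.mpr fun y ↦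
    ⟨conj_mem_range_commutatorElementHom (Commute.refl g), fun hy ↦ by
      convert conj_mem_range_commutatorElementHom (Commute.refl g).inv_left hy using 1
      group⟩
  rw [← normalizer_eq_top_iff, eq_top_iff, ← hgen]
  exact sup_le hA (zpowers_le.mpr hg)

lemma range_commutatorElementHom (hgen : A ⊔ zpowers g = ⊤) :
    (commutatorElementHom A g).range = commutator G := by
  have := range_commutatorElementHom_normal hgen
  refine le_antisymm ?_ (commutator_le_of_sup_zpowers_eq_top hgen fun a ha ↦ ⟨⟨a, ha⟩, rfl⟩)
  rintro _ ⟨a, rfl⟩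
  rw [_root_.commutator_def]
  exact commutator_mem_commutator (mem_top _) (mem_top _)

lemma ker_commutatorElementHom (hgen : A ⊔ zpowers g = ⊤) :
    (commutatorElementHom A g).ker = (A ⊓ center G).subgroupOf A := by
  ext a
  rw [MonoidHom.mem_ker, mem_subgroupOf, commutatorElementHom_apply,
    commutatorElement_eq_one_iff_commute, mem_inf]
  refine ⟨fun hg ↦ ⟨a.2, mem_center_of_sup_zpowers_eq_top hgen
    (fun b hb ↦ setLike_mul_comm a.2 hb) hg⟩, fun h ↦ (mem_center_iff.mp h.2 g).symm⟩

end CommutatorElementHom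

theorem card_eq_card_commutator_mul_card_inf_center {A : Subgroup G} [A.Normal]
    [IsMulCommutative A] {g : G} (hgen : A ⊔ zpowers g = ⊤) :
    Nat.card A = Nat.card (commutator G) * Nat.card (A ⊓ center G : Subgroup G) := by
  rw [← (commutatorElementHom A g).ker.card_mul_index, index_ker, ker_commutatorElementHom hgen,
    range_commutatorElementHom hgen, mul_comm,
    Nat.card_congr (subgroupOfEquivOfLe inf_le_left).toEquiv]

end

theorem stmt_11_general (G : Type*) [Group G]
    (A : Subgroup G) [A.Normal]
    (hab : ∀ x ∈ A, ∀ y ∈ A, x * y = y * x)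
    (hcyc : IsCyclic (G ⧸ A)) :
    Nat.card A = Nat.card (commutator G) * Nat.card (A ⊓ Subgroup.center G : Subgroup G) := by
  have : IsMulCommutative A := .of_setLike_mul_comm hab
  obtain ⟨q, hq⟩ := hcyc.exists_generator
  obtain ⟨g, rfl⟩ := QuotientGroup.mk'_surjective A q
  exact card_eq_card_commutator_mul_card_inf_center
    (sup_zpowers_eq_top_of_zpowers_mk_eq_top ((Subgroup.eq_top_iff' _).mpr hq))

/-- If `A` is an abelian normal subgroup of a finite `p`-group `G` with `G/A` cyclic,
then `|A| = |G'| · |A ∩ Z(G)|`. -/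
theorem stmt_11 (p : ℕ) (hp : p.Prime) (G : Type*) [Group G] [Finite G]
    (hG : IsPGroup p G) (A : Subgroup G) [A.Normal]
    (hab : ∀ x ∈ A, ∀ y ∈ A, x * y = y * x)
    (hcyc : IsCyclic (G ⧸ A)) :
    Nat.card A = Nat.card (commutator G) * Nat.card (A ⊓ Subgroup.center G : Subgroup G) :=
  stmt_11_general G A hab hcyc
end

section
/- Let G be a finite p-group with p odd and let X be a subgroup of G of order p. Then N_G(X) = C_G(X), and X commutes with every G-conjugate of X provided every subgroup of G has at most p conjugates. -/
/-!
`N_G(X)/C_G(X)` embeds in `Aut X`, of order `p - 1`, and is a `p`-group, so it is trivial.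
For the second claim let `X` act on `G ⧸ N_G(X)`, a set of at most `p` points on which the
trivial coset is fixed. The number of fixed points is congruent to the number of points
modulo `p`, so every coset is fixed: `X` lies in every conjugate of `N_G(X) = C_G(X)`.
-/

open MulAction

theorem IsPGroup.fixedPoints_eq_univ_of_card_le {p : ℕ} [Fact p.Prime] {P α : Type*} [Group P]
    [MulAction P α] [Finite α] (hP : IsPGroup p P) (hα : Nat.card α ≤ p) {a : α}
    (ha : a ∈ fixedPoints P α) : fixedPoints P α = Set.univ := by
  have hle : Nat.card (fixedPoints P α) ≤ Nat.card α := Finite.card_subtype_le _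
  have hpos : 0 < Nat.card (fixedPoints P α) := Nat.card_pos_iff.mpr ⟨⟨⟨a, ha⟩⟩, inferInstance⟩
  have hdvd : p ∣ Nat.card α - Nat.card (fixedPoints P α) :=
    (Nat.modEq_iff_dvd' hle).mp (hP.card_modEq_card_fixedPoints α).symm
  have hdiff := Nat.eq_zero_of_dvd_of_lt hdvd (by omega)
  exact (Set.eq_univ_iff_ncard _).mpr (by rw [← Nat.card_coe_set_eq]; omega)

namespace Subgroup

variable {G : Type*} [Group G]

theorem le_normalCore_of_isPGroup_of_index_le {p : ℕ} [Fact p.Prime] {H P : Subgroup G}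
    [H.FiniteIndex] (hP : IsPGroup p P) (hPH : P ≤ H) (hH : H.index ≤ p) :
    P ≤ H.normalCore := by
  have hfix : fixedPoints P (G ⧸ H) = Set.univ := by
    refine hP.fixedPoints_eq_univ_of_card_le (a := ((1 : G) : G ⧸ H)) ?_ fun x ↦ ?_
    · rwa [← index_eq_card]
    · show ((x * 1 : G) : G ⧸ H) = ((1 : G) : G ⧸ H)
      simpa [QuotientGroup.eq] using hPH x.2
  rw [normalCore_eq_ker]
  intro x hx
  ext q
  exact (hfix ▸ Set.mem_univ q : q ∈ fixedPoints P (G ⧸ H)) ⟨x, hx⟩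

theorem normalizer_eq_centralizer_of_coprime {H : Subgroup G}
    (h : ∀ g ∈ normalizer (H : Set G), (orderOf g).Coprime (Nat.card (MulAut H))) :
    normalizer (H : Set G) = centralizer (H : Set G) := by
  refine le_antisymm (fun g hg ↦ ?_) (centralizer_le_normalizer _)
  have hker : (⟨g, hg⟩ : normalizer (H : Set G)) ∈ H.normalizerMonoidHom.ker := by
    rw [MonoidHom.mem_ker, ← orderOf_eq_one_iff]
    refine Nat.eq_one_of_dvd_coprimes (h g hg) ?_ (_root_.orderOf_dvd_natCard _)
    simpa using orderOf_map_dvd H.normalizerMonoidHom ⟨g, hg⟩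
  rwa [normalizerMonoidHom_ker, mem_subgroupOf] at hker

end Subgroup

theorem IsPGroup.normalizer_eq_centralizer_of_card_eq_prime {p : ℕ} [Fact p.Prime] {G : Type*}
    [Group G] (hG : IsPGroup p G) {X : Subgroup G} (hX : Nat.card X = p) :
    Subgroup.normalizer (X : Set G) = Subgroup.centralizer (X : Set G) := by
  have : Finite X := Nat.finite_of_card_ne_zero (hX ▸ (Fact.out : p.Prime).ne_zero)
  have : IsCyclic X := isCyclic_of_prime_card hX
  refine Subgroup.normalizer_eq_centralizer_of_coprime fun g _ ↦ ?_
  obtain ⟨k, hk⟩ := IsPGroup.iff_orderOf.mp hG g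
  rw [hk, IsCyclic.card_mulAut X, hX, Nat.totient_prime Fact.out]
  exact Nat.Coprime.pow_left _ ((Nat.coprime_self_sub_right (Fact.out : p.Prime).one_le).mpr
    (Nat.coprime_one_right _))

theorem stmt_13_general (p : ℕ) (hp : p.Prime) (G : Type*) [Group G] [Finite G]
    (hG : IsPGroup p G)
    (hsbr : ∀ H : Subgroup G, (Subgroup.normalizer (H : Set G)).index ≤ p)
    (X : Subgroup G) (hX : Nat.card X = p) :
    Subgroup.normalizer (X : Set G) = Subgroup.centralizer (X : Set G) ∧
      ∀ g : G, ∀ x ∈ X, ∀ y ∈ X.map (MulAut.conj g).toMonoidHom, Commute x y := by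
  have := Fact.mk hp
  have hNC := hG.normalizer_eq_centralizer_of_card_eq_prime hX
  have hcore : X ≤ (Subgroup.normalizer (X : Set G)).normalCore :=
    Subgroup.le_normalCore_of_isPGroup_of_index_le (hG.to_subgroup X) Subgroup.le_normalizer
      (hsbr X)
  refine ⟨hNC, fun g x hx _ ⟨y, hy, hconj⟩ ↦ ?_⟩
  have hyC : g * y * g⁻¹ ∈ Subgroup.centralizer (X : Set G) := hNC ▸ hcore hy g
  rw [← hconj]
  exact Subgroup.mem_centralizer_iff.mp hyC x hx

/-- Let `G` be a finite `p`-group, `p` odd, of subgroup breadth at most 1, and `X ≤ G`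
of order `p`. Then `N_G(X) = C_G(X)` and `X` commutes with each of its conjugates. -/
theorem stmt_13 (p : ℕ) (hp : p.Prime) (hodd : Odd p) (G : Type*) [Group G] [Finite G]
    (hG : IsPGroup p G)
    (hsbr : ∀ H : Subgroup G, (Subgroup.normalizer (H : Set G)).index ≤ p)
    (X : Subgroup G) (hX : Nat.card X = p) :
    Subgroup.normalizer (X : Set G) = Subgroup.centralizer (X : Set G) ∧
      ∀ g : G, ∀ x ∈ X, ∀ y ∈ X.map (MulAut.conj g).toMonoidHom, Commute x y :=
  stmt_13_general p hp G hG hsbr X hX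
end

section
/- The central product of Q8 and D8 (identifying their centers), a group of order 32, has the property that every subgroup has at most 2 conjugates, and its center has index 16. -/
/-!
`Q₈` and `D₈` are extraspecial: their centre is generated by an involution modulo which they are
elementary abelian. Identifying the two involutions, the central product `G` inherits this, with
centre `{1, z}` of order 2, whence the index 16. As all commutators lie in `{1, z}`, a subgroup
containing `z` is normal, and the centralizer of any `h` is the kernel of `g ↦ ⁅g, h⁆`, so has
index at most 2. A subgroup avoiding `z` has order at most 2, since otherwise it would contain a
Klein four-group meeting the centre trivially; a finite check in `Q₈ × D₈` shows that there is
none (the quadratic form `x ↦ x²` on `G / ⟨z⟩ ≅ 𝔽₂⁴` has Witt index 1).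
-/

open scoped commutatorElement
open Subgroup

/-- The axioms of an extraspecial 2-group with centre `{1, z}`, also satisfied by the cyclic group
of order 2. -/
structure IsExtraspecialWith {G : Type*} [Group G] (z : G) : Prop where
  ne_one : z ≠ 1
  mem_center : z ∈ center G
  commutator_eq : ∀ x y : G, ⁅x, y⁆ = 1 ∨ ⁅x, y⁆ = z
  mul_self_eq : ∀ x : G, x * x = 1 ∨ x * x = z
  eq_of_mem_center : ∀ x ∈ center G, x = 1 ∨ x = z

def KleinFourSubgroupsMeetCenter (G : Type*) [Group G] : Prop :=
  ∀ x y : G, x * x = 1 → y * y = 1 → Commute x y →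
    x ∈ center G ∨ y ∈ center G ∨ x = y ∨ x * y ∈ center G

theorem Subgroup.range_subtype_comp_mulEquiv {G H : Type*} [Group G] [Group H]
    (A : Subgroup G) (e : H ≃* A) : (A.subtype.comp e.toMonoidHom).range = A := by
  rw [MonoidHom.range_comp, MonoidHom.range_eq_top.mpr e.surjective, ← MonoidHom.range_eq_map,
    range_subtype]

section CommutatorLeftHom

variable {G : Type*} [Group G] {h : G}

def commutatorLeftHom (hc : ∀ g : G, ⁅g, h⁆ ∈ center G) : G →* G where
  toFun g := ⁅g, h⁆
  map_one' := commutatorElement_one_left h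
  map_mul' a b := by
    rw [commutatorElement_mul_left_eq_conj_mul, mem_center_iff.mp (hc b) a, mul_inv_cancel_right]
    exact mem_center_iff.mp (hc a) _

theorem ker_commutatorLeftHom (hc : ∀ g : G, ⁅g, h⁆ ∈ center G) :
    (commutatorLeftHom hc).ker = centralizer {h} := by
  ext g
  rw [MonoidHom.mem_ker, mem_centralizer_singleton_iff]
  exact commutatorElement_eq_one_iff_mul_comm

end CommutatorLeftHom

namespace IsExtraspecialWith

variable {G : Type*} [Group G] {z : G}

theorem mul_self_eq_one (hz : IsExtraspecialWith z) : z * z = 1 :=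
  (hz.mul_self_eq z).resolve_right fun h => hz.ne_one (mul_eq_left.mp h)

theorem mem_center_iff (hz : IsExtraspecialWith z) {x : G} : x ∈ center G ↔ x = 1 ∨ x = z := by
  refine ⟨hz.eq_of_mem_center x, ?_⟩
  rintro (rfl | rfl)
  exacts [one_mem _, hz.mem_center]

theorem commutator_mem_center (hz : IsExtraspecialWith z) (x y : G) : ⁅x, y⁆ ∈ center G :=
  hz.mem_center_iff.mpr (hz.commutator_eq x y)

theorem card_center (hz : IsExtraspecialWith z) : Nat.card (center G) = 2 := by
  have hset : (center G : Set G) = {1, z} := Set.ext fun _ => hz.mem_center_iff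
  rw [← SetLike.coe_sort_coe, hset, Nat.card_coe_set_eq, Set.ncard_pair hz.ne_one.symm]

theorem index_centralizer_dvd_two (hz : IsExtraspecialWith z) (h : G) :
    (centralizer {h}).index ∣ 2 := by
  have hc := fun g => hz.commutator_mem_center g h
  rw [← ker_commutatorLeftHom hc, index_ker, ← hz.card_center]
  refine card_dvd_of_le ?_
  rintro - ⟨g, rfl⟩
  exact hc g

theorem normal_of_mem (hz : IsExtraspecialWith z) {H : Subgroup G} (hzH : z ∈ H) : H.Normal := by
  refine commutator_top_left_le_iff.mp (commutator_le.mpr fun g _ h _ => ?_)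
  rcases hz.commutator_eq g h with hgh | hgh <;> rw [hgh]
  exacts [one_mem H, hzH]

theorem exists_coe_subset_pair (hz : IsExtraspecialWith z)
    (hklein : KleinFourSubgroupsMeetCenter G) {H : Subgroup G} (hzH : z ∉ H) : ∃ h : G, (H : Set G) ⊆ {1, h} := by
  have hcen : ∀ x ∈ H, x ∈ center G → x = 1 := fun x hx hxc =>
    (hz.eq_of_mem_center x hxc).resolve_right fun hxz => hzH (hxz ▸ hx)
  have hsq : ∀ x ∈ H, x * x = 1 := fun x hx =>
    hcen _ (mul_mem hx hx) (hz.mem_center_iff.mpr (hz.mul_self_eq x))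
  by_cases htriv : ∀ x ∈ H, x = 1
  · exact ⟨1, fun x hx => Or.inl (htriv x hx)⟩
  push Not at htriv
  obtain ⟨y, hy, hy1⟩ := htriv
  refine ⟨y, fun x hx => ?_⟩
  have hxyH : ⁅x, y⁆ ∈ H := by
    rw [commutatorElement_def]
    exact mul_mem (mul_mem (mul_mem hx hy) (inv_mem hx)) (inv_mem hy)
  have hxy : Commute x y := commutatorElement_eq_one_iff_commute.mp <|
    hcen _ hxyH (hz.commutator_mem_center x y)
  rcases hklein x y (hsq x hx) (hsq y hy) hxy with hxc | hyc | rfl | hxyc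
  · exact Or.inl (hcen x hx hxc)
  · exact absurd (hcen y hy hyc) hy1
  · exact Or.inr rfl
  · have := hcen _ (mul_mem hx hy) hxyc
    rw [mul_eq_one_iff_eq_inv, inv_eq_of_mul_eq_one_right (hsq y hy)] at this
    exact Or.inr this

theorem index_normalizer_dvd_two (hz : IsExtraspecialWith z)
    (hklein : KleinFourSubgroupsMeetCenter G) (H : Subgroup G) : (normalizer (H : Set G)).index ∣ 2 := by
  by_cases hzH : z ∈ H
  · have := hz.normal_of_mem hzH
    rw [normalizer_eq_top, index_top]
    exact one_dvd 2
  obtain ⟨h, hHh⟩ := hz.exists_coe_subset_pair hklein hzH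
  refine (index_dvd_of_le fun g hg => ?_).trans (hz.index_centralizer_dvd_two h)
  refine centralizer_le_normalizer _ (mem_centralizer_iff.mpr fun x hx => ?_)
  rcases hHh hx with rfl | rfl
  · simp
  · exact (mem_centralizer_singleton_iff.mp hg).symm

end IsExtraspecialWith

namespace MonoidHom

variable {M N G : Type*} [Group M] [Group N] [Group G] {f : M →* G} {g : N →* G}
  {comm : ∀ m n, Commute (f m) (g n)}

theorem mem_center_of_noncommCoprod_mem_center (hf : Function.Injective f)
    (hg : Function.Injective g) {p : M × N} (hp : f.noncommCoprod g comm p ∈ center G) :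
    p.1 ∈ center M ∧ p.2 ∈ center N := by
  constructor
  · refine mem_center_iff.mpr fun m => (Commute.of_map hf ?_).eq
    have h : Commute (f m) (f.noncommCoprod g comm p) := mem_center_iff.mp hp (f m)
    rw [noncommCoprod_apply] at h
    simpa using h.mul_right (comm m p.2).inv_right
  · refine mem_center_iff.mpr fun n => (Commute.of_map hg ?_).eq
    have h : Commute (g n) (f.noncommCoprod g comm p) := mem_center_iff.mp hp (g n)
    rw [noncommCoprod_apply'] at h
    simpa using h.mul_right (comm p.1 n).symm.inv_right

end MonoidHom

namespace IsExtraspecialWith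

variable {M N G : Type*} [Group M] [Group N] [Group G] {c : M} {d : N} {f : M →* G}
  {g : N →* G} {comm : ∀ m n, Commute (f m) (g n)}

theorem eq_one_or_eq_of_noncommCoprod_eq_one (hc : IsExtraspecialWith c)
    (hd : IsExtraspecialWith d) (hf : Function.Injective f) (hg : Function.Injective g)
    {p : M × N} (hp : f.noncommCoprod g comm p = 1) : p = 1 ∨ p = (c, d) := by
  obtain ⟨hp₁, hp₂⟩ := MonoidHom.mem_center_of_noncommCoprod_mem_center hf hg (hp ▸ one_mem _)
  obtain ⟨m, n⟩ := p
  rw [MonoidHom.noncommCoprod_apply] at hp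
  rcases hc.eq_of_mem_center m hp₁ with rfl | rfl <;>
    rcases hd.eq_of_mem_center n hp₂ with rfl | rfl
  · exact Or.inl rfl
  · rw [map_one, one_mul, ← g.map_one] at hp
    exact absurd (hg hp) hd.ne_one
  · rw [map_one, mul_one, ← f.map_one] at hp
    exact absurd (hf hp) hc.ne_one
  · exact Or.inr rfl

theorem map_mul_map_eq_one [Finite G] (hc : IsExtraspecialWith c) (hd : IsExtraspecialWith d)
    (hf : Function.Injective f) (hg : Function.Injective g)
    (hsurj : Function.Surjective (f.noncommCoprod g comm))
    (hcard : Nat.card (M × N) = 2 * Nat.card G) : f c * g d = 1 := by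
  set ψ := f.noncommCoprod g comm
  have hker : Nat.card ψ.ker = 2 := by
    have := card_mul_index ψ.ker
    rw [index_ker, MonoidHom.range_eq_top.mpr hsurj, card_top, hcard] at this
    exact Nat.eq_of_mul_eq_mul_right Nat.card_pos this
  obtain ⟨⟨p, hp⟩, hp1⟩ := (Subgroup.ne_bot_iff_exists_ne_one (H := ψ.ker)).mp
    fun h => by rw [(eq_bot_iff_card _).mp h] at hker; omega
  rcases hc.eq_one_or_eq_of_noncommCoprod_eq_one hd hf hg hp with h | rfl
  · exact absurd (Subtype.ext h) hp1
  · exact hp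

theorem noncommCoprod_eq_one_or_eq (hc : IsExtraspecialWith c) (hcd : f c * g d = 1)
    {p : M × N} (hp₁ : p.1 = 1 ∨ p.1 = c) (hp₂ : p.2 = 1 ∨ p.2 = d) :
    f.noncommCoprod g comm p = 1 ∨ f.noncommCoprod g comm p = f c := by
  have hgd : g d = f c := by
    rw [eq_inv_of_mul_eq_one_right hcd, ← map_inv, inv_eq_of_mul_eq_one_right hc.mul_self_eq_one]
  have hff : f c * f c = 1 := by rw [← map_mul, hc.mul_self_eq_one, map_one]
  rw [MonoidHom.noncommCoprod_apply]
  rcases hp₁ with h₁ | h₁ <;> rcases hp₂ with h₂ | h₂ <;> simp [h₁, h₂, hgd, hff]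

theorem noncommCoprod (hc : IsExtraspecialWith c) (hd : IsExtraspecialWith d)
    (hf : Function.Injective f) (hg : Function.Injective g)
    (hsurj : Function.Surjective (f.noncommCoprod g comm)) (hcd : f c * g d = 1) :
    IsExtraspecialWith (f c) where
  ne_one h := hc.ne_one (hf (h.trans f.map_one.symm))
  mem_center := by
    refine Subgroup.mem_center_iff.mpr fun x => ?_
    obtain ⟨⟨m, n⟩, rfl⟩ := hsurj x
    have hmc : Commute m c := Subgroup.mem_center_iff.mp hc.mem_center m
    rw [MonoidHom.noncommCoprod_apply]
    exact ((hmc.map f).mul_left (comm c n).symm).eq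
  commutator_eq x y := by
    obtain ⟨p, rfl⟩ := hsurj x
    obtain ⟨q, rfl⟩ := hsurj y
    rw [← map_commutatorElement]
    exact hc.noncommCoprod_eq_one_or_eq hcd (hc.commutator_eq p.1 q.1) (hd.commutator_eq p.2 q.2)
  mul_self_eq x := by
    obtain ⟨p, rfl⟩ := hsurj x
    rw [← map_mul]
    exact hc.noncommCoprod_eq_one_or_eq hcd (hc.mul_self_eq p.1) (hd.mul_self_eq p.2)
  eq_of_mem_center x hx := by
    obtain ⟨p, rfl⟩ := hsurj x
    obtain ⟨hp₁, hp₂⟩ := MonoidHom.mem_center_of_noncommCoprod_mem_center hf hg hx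
    exact hc.noncommCoprod_eq_one_or_eq hcd (hc.eq_of_mem_center _ hp₁)
      (hd.eq_of_mem_center _ hp₂)

end IsExtraspecialWith

theorem QuaternionGroup.isExtraspecialWith_a_two :
    IsExtraspecialWith (QuaternionGroup.a 2 : QuaternionGroup 2) where
  ne_one := by decide
  mem_center := Subgroup.mem_center_iff.mpr (by decide)
  commutator_eq := by decide
  mul_self_eq := by decide
  eq_of_mem_center x hx := (by decide : ∀ x : QuaternionGroup 2,
    (∀ g, g * x = x * g) → x = 1 ∨ x = .a 2) x (Subgroup.mem_center_iff.mp hx)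

theorem DihedralGroup.isExtraspecialWith_r_two :
    IsExtraspecialWith (DihedralGroup.r 2 : DihedralGroup 4) where
  ne_one := by decide
  mem_center := Subgroup.mem_center_iff.mpr (by decide)
  commutator_eq := by decide
  mul_self_eq := by decide
  eq_of_mem_center x hx := (by decide : ∀ x : DihedralGroup 4,
    (∀ g, g * x = x * g) → x = 1 ∨ x = .r 2) x (Subgroup.mem_center_iff.mp hx)

section QuaternionDihedral

open QuaternionGroup DihedralGroup

set_option maxRecDepth 10000 in
/-- `K` is the kernel of `Q₈ × D₈ → Q₈ * D₈` and `Z` the centre of `Q₈ × D₈`. -/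
theorem quaternionGroup_prod_dihedralGroup_no_singular_plane :
    let K : Finset (QuaternionGroup 2 × DihedralGroup 4) := {1, (a 2, r 2)}
    let Z : Finset (QuaternionGroup 2 × DihedralGroup 4) := {1, a 2} ×ˢ {1, r 2}
    ∀ p q, p * p ∈ K → q * q ∈ K → ⁅p, q⁆ ∈ K → p ∈ Z ∨ q ∈ Z ∨ p * q⁻¹ ∈ K ∨ p * q ∈ Z := by
  decide

variable {G : Type*} [Group G] {f : QuaternionGroup 2 →* G} {g : DihedralGroup 4 →* G}
  {comm : ∀ m n, Commute (f m) (g n)}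

theorem kleinFourSubgroupsMeetCenter_of_noncommCoprod (hf : Function.Injective f)
    (hg : Function.Injective g) (hsurj : Function.Surjective (f.noncommCoprod g comm))
    (hcd : f (a 2) * g (r 2) = 1) : KleinFourSubgroupsMeetCenter G := by
  intro x y hx hy hxy
  set ψ := f.noncommCoprod g comm
  have hQ := isExtraspecialWith_a_two
  have hD := isExtraspecialWith_r_two
  have hker : ∀ p, ψ p = 1 ↔ p ∈ ({1, (a 2, r 2)} : Finset _) := fun p => by
    rw [Finset.mem_insert, Finset.mem_singleton]
    refine ⟨hQ.eq_one_or_eq_of_noncommCoprod_eq_one hD hf hg, ?_⟩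
    rintro (rfl | rfl)
    exacts [map_one ψ, hcd]
  have hcen : ∀ p ∈ ({1, a 2} ×ˢ {1, r 2} : Finset _), ψ p ∈ center G := fun p hp => by
    simp only [Finset.mem_product, Finset.mem_insert, Finset.mem_singleton] at hp
    exact (hQ.noncommCoprod hD hf hg hsurj hcd).mem_center_iff.mpr
      (hQ.noncommCoprod_eq_one_or_eq hcd hp.1 hp.2)
  obtain ⟨p, rfl⟩ := hsurj x
  obtain ⟨q, rfl⟩ := hsurj y
  rw [← map_mul, hker] at hx hy
  rw [← commutatorElement_eq_one_iff_commute, ← map_commutatorElement, hker] at hxy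
  rcases quaternionGroup_prod_dihedralGroup_no_singular_plane p q hx hy hxy with h | h | h | h
  · exact Or.inl (hcen p h)
  · exact Or.inr (Or.inl (hcen q h))
  · rw [← hker, map_mul, map_inv, mul_inv_eq_one] at h
    exact Or.inr (Or.inr (Or.inl h))
  · rw [← map_mul]
    exact Or.inr (Or.inr (Or.inr (hcen _ h)))

end QuaternionDihedral

open QuaternionGroup DihedralGroup in
/-- The central product `Q₈ * D₈` (of order 32) has subgroup breadth 1 and center of
index 16. -/
theorem stmt_17 (G : Type*) [Group G] [Finite G] (A B : Subgroup G)
    (hA : Nonempty (A ≃* QuaternionGroup 2))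
    (hB : Nonempty (B ≃* DihedralGroup 4))
    (hcomm : ∀ a ∈ A, ∀ b ∈ B, Commute a b)
    (hgen : A ⊔ B = ⊤)
    (hcard : Nat.card G = 32) :
    (∀ H : Subgroup G, (Subgroup.normalizer (H : Set G)).index ≤ 2) ∧ (Subgroup.center G).index = 16 := by
  obtain ⟨eA⟩ := hA
  obtain ⟨eB⟩ := hB
  set f : QuaternionGroup 2 →* G := A.subtype.comp eA.symm.toMonoidHom
  set g : DihedralGroup 4 →* G := B.subtype.comp eB.symm.toMonoidHom
  have comm : ∀ m n, Commute (f m) (g n) := fun m n => hcomm _ (eA.symm m).2 _ (eB.symm n).2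
  have hf : Function.Injective f := A.subtype_injective.comp eA.symm.injective
  have hg : Function.Injective g := B.subtype_injective.comp eB.symm.injective
  have hsurj : Function.Surjective (f.noncommCoprod g comm) := by
    rw [← MonoidHom.range_eq_top, MonoidHom.noncommCoprod_range]
    rwa [range_subtype_comp_mulEquiv, range_subtype_comp_mulEquiv]
  have hQ := isExtraspecialWith_a_two
  have hD := isExtraspecialWith_r_two
  have hcd : f (a 2) * g (r 2) = 1 := hQ.map_mul_map_eq_one hD hf hg hsurj (by
    rw [Nat.card_prod, Nat.card_eq_fintype_card (α := QuaternionGroup 2), QuaternionGroup.card,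
      DihedralGroup.nat_card, hcard])
  have hz := hQ.noncommCoprod hD hf hg hsurj hcd
  refine ⟨fun H => Nat.le_of_dvd two_pos (hz.index_normalizer_dvd_two
    (kleinFourSubgroupsMeetCenter_of_noncommCoprod hf hg hsurj hcd) H), ?_⟩
  have := card_mul_index (center G)
  rw [hz.card_center, hcard] at this
  omega
end
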